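/- Let G be an amply regular graph with parameters (n, d, α, β). Then for every edge xy ∈ E, the Lin-Lu-Yau curvature satisfies κ(x,y) ≤ (2 + α)/d. -/

import Mathlib

/-!
Testing a transport plan against the 1-Lipschitz function `dist(·, y)` (the easy half of
Kantorovich duality) bounds `W(μ_x^p, μ_y^p)` below by `1 - (1 - p)(2 + α)/d`: apart from `y`
and the `α` common neighbours, the neighbours of `x` lie at distance at least `2` from `y`.
The limit defining `κ(x, y)` exists because `(1 - W(μ_x^p, μ_y^p))/(1 - p)` is monotone in `p`:
mixing a plan for idleness `p` with the plan `δ_x ↦ δ_y` gives a plan for every larger idleness.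
-/

open Filter Topology
open scoped Classical

variable {V : Type*}

/-- The L¹-Wasserstein (optimal transport) distance between two probability
measures on the vertex set of a graph, with respect to the graph distance. -/
noncomputable def wassDist (G : SimpleGraph V) (μ ν : V → ℝ) : ℝ :=
  sInf {c : ℝ | ∃ π : V → V → ℝ, (∀ u v, 0 ≤ π u v) ∧
    (∀ u, ∑ᶠ v, π u v = μ u) ∧ (∀ v, ∑ᶠ u, π u v = ν v) ∧
    c = ∑ᶠ u, ∑ᶠ v, (G.dist u v : ℝ) * π u v}

/-- The probability measure `μ_x^p` with idleness `p` around vertex `x`. -/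
noncomputable def muIdle (G : SimpleGraph V) [G.LocallyFinite] (p : ℝ) (x : V) : V → ℝ :=
  fun v => if v = x then p else if G.Adj x v then (1 - p) / (G.degree x : ℝ) else 0

/-- The `p`-Ollivier-Ricci curvature `κ_p(x,y)`. -/
noncomputable def ollivier (G : SimpleGraph V) [G.LocallyFinite] (p : ℝ) (x y : V) : ℝ :=
  1 - wassDist G (muIdle G p x) (muIdle G p y) / (G.dist x y : ℝ)

/-- The Lin-Lu-Yau curvature `κ(x,y) = lim_{p→1} κ_p(x,y)/(1-p)`. -/
noncomputable def lly (G : SimpleGraph V) [G.LocallyFinite] (x y : V) : ℝ :=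
  limUnder (𝓝[<] (1 : ℝ)) (fun p => ollivier G p x y / (1 - p))

/-- An amply regular graph with parameters `(n, d, a, b)`. -/
def IsAmplyRegular (G : SimpleGraph V) [Fintype V] [DecidableEq V] [DecidableRel G.Adj]
    (n d a b : ℕ) : Prop :=
  Fintype.card V = n ∧ G.IsRegularOfDegree d ∧
  (∀ x y : V, G.Adj x y → (G.neighborFinset x ∩ G.neighborFinset y).card = a) ∧
  (∀ x y : V, G.dist x y = 2 → (G.neighborFinset x ∩ G.neighborFinset y).card = b)


open Finset

section Transport

variable [Fintype V] (G : SimpleGraph V)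

def planCosts (μ ν : V → ℝ) : Set ℝ :=
  {c : ℝ | ∃ π : V → V → ℝ, (∀ u v, 0 ≤ π u v) ∧
    (∀ u, ∑ v, π u v = μ u) ∧ (∀ v, ∑ u, π u v = ν v) ∧
    c = ∑ u, ∑ v, (G.dist u v : ℝ) * π u v}

lemma wassDist_eq_sInf_planCosts (μ ν : V → ℝ) : wassDist G μ ν = sInf (planCosts G μ ν) := by
  simp only [wassDist, planCosts, finsum_eq_sum_of_fintype]

lemma planCosts_bddBelow (μ ν : V → ℝ) : BddBelow (planCosts G μ ν) := by
  refine ⟨0, ?_⟩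
  rintro _ ⟨π, hπ, -, -, rfl⟩
  exact sum_nonneg fun u _ => sum_nonneg fun v _ => mul_nonneg (Nat.cast_nonneg _) (hπ u v)

lemma sum_dist_mul_mem_planCosts {μ ν : V → ℝ} (hμ : 0 ≤ μ) (hν : 0 ≤ ν)
    (hμ1 : ∑ u, μ u = 1) (hν1 : ∑ v, ν v = 1) :
    ∑ u, ∑ v, (G.dist u v : ℝ) * (μ u * ν v) ∈ planCosts G μ ν :=
  ⟨fun u v => μ u * ν v, fun u v => mul_nonneg (hμ u) (hν v),
    fun u => by rw [← mul_sum, hν1, mul_one], fun v => by rw [← sum_mul, hμ1, one_mul], rfl⟩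

lemma dist_mem_planCosts_single (x y : V) :
    (G.dist x y : ℝ) ∈ planCosts G (Pi.single x 1) (Pi.single y 1) := by
  convert sum_dist_mul_mem_planCosts G (μ := Pi.single x 1) (ν := Pi.single y 1)
    (Pi.single_nonneg.2 zero_le_one) (Pi.single_nonneg.2 zero_le_one) (by simp) (by simp)
  simp [Pi.single_apply]

lemma convexComb_mem_planCosts {μ ν μ' ν' : V → ℝ} {c c' t : ℝ} (hc : c ∈ planCosts G μ ν)
    (hc' : c' ∈ planCosts G μ' ν') (ht0 : 0 ≤ t) (ht1 : t ≤ 1) :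
    t * c + (1 - t) * c' ∈ planCosts G (t • μ + (1 - t) • μ') (t • ν + (1 - t) • ν') := by
  obtain ⟨π, hπ, hrow, hcol, rfl⟩ := hc
  obtain ⟨π', hπ', hrow', hcol', rfl⟩ := hc'
  refine ⟨fun u v => t * π u v + (1 - t) * π' u v, fun u v => ?_, fun u => ?_, fun v => ?_, ?_⟩
  · have := hπ u v; have := hπ' u v; have : 0 ≤ 1 - t := by linarith
    positivity
  · simp [sum_add_distrib, ← mul_sum, hrow, hrow']
  · simp [sum_add_distrib, ← mul_sum, hcol, hcol']
  · simp only [mul_add, sum_add_distrib, mul_sum]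
    congr 1 <;> exact sum_congr rfl fun u _ => sum_congr rfl fun v _ => by ring

lemma sum_mul_sub_sum_mul_le_of_mem_planCosts {μ ν : V → ℝ} {c : ℝ}
    (hc : c ∈ planCosts G μ ν) {f : V → ℝ} (hf : ∀ u v, f u - f v ≤ G.dist u v) :
    ∑ u, f u * μ u - ∑ v, f v * ν v ≤ c := by
  obtain ⟨π, hπ, hrow, hcol, rfl⟩ := hc
  calc ∑ u, f u * μ u - ∑ v, f v * ν v = ∑ u, ∑ v, (f u - f v) * π u v := by
        simp only [sub_mul, sum_sub_distrib, ← mul_sum, hrow]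
        rw [sum_comm]
        simp only [← mul_sum, hcol]
    _ ≤ ∑ u, ∑ v, (G.dist u v : ℝ) * π u v :=
        sum_le_sum fun u _ => sum_le_sum fun v _ => mul_le_mul_of_nonneg_right (hf u v) (hπ u v)

end Transport

section Idle

variable (G : SimpleGraph V)

lemma muIdle_nonneg [G.LocallyFinite] {p : ℝ} (h0 : 0 ≤ p) (h1 : p ≤ 1) (x : V) :
    0 ≤ muIdle G p x := by
  intro v
  unfold muIdle
  have : 0 ≤ 1 - p := by linarith
  split_ifs <;> positivity

lemma muIdle_lazy [G.LocallyFinite] (p t : ℝ) (x : V) :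
    muIdle G (t * p + (1 - t)) x = t • muIdle G p x + (1 - t) • Pi.single x 1 := by
  ext v
  by_cases hv : v = x
  · subst hv; simp [muIdle]
  · by_cases hxv : G.Adj x v
    · simp only [muIdle, hv, hxv, if_false, if_true, Pi.add_apply, Pi.smul_apply, smul_eq_mul,
        Pi.single_eq_of_ne hv, mul_zero, add_zero]
      ring
    · simp [muIdle, hv, hxv]

variable [Fintype V] [DecidableRel G.Adj]

lemma sum_mul_muIdle (p : ℝ) (x : V) (f : V → ℝ) :
    ∑ u, f u * muIdle G p x u =
      p * f x + (1 - p) / G.degree x * ∑ u ∈ G.neighborFinset x, f u := by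
  have : ∀ u, f u * muIdle G p x u =
      (if u = x then p * f u else 0) + (if G.Adj x u then (1 - p) / G.degree x * f u else 0) := by
    intro u
    by_cases hu : u = x
    · subst hu; simp [muIdle, mul_comm]
    · by_cases hxu : G.Adj x u <;> simp [muIdle, hu, hxu, mul_comm]
  simp only [this, sum_add_distrib, sum_ite_eq', if_pos (mem_univ x), ← sum_filter,
    ← SimpleGraph.neighborFinset_eq_filter, mul_sum]

lemma sum_muIdle {x : V} (hx : 0 < G.degree x) (p : ℝ) : ∑ u, muIdle G p x u = 1 := by
  have := sum_mul_muIdle G p x 1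
  simp only [Pi.one_apply, one_mul, sum_const, SimpleGraph.card_neighborFinset_eq_degree,
    nsmul_eq_mul, mul_one] at this
  rw [this]
  field_simp
  ring

end Idle

namespace SimpleGraph

variable {G : SimpleGraph V} [Fintype V] [DecidableEq V] [DecidableRel G.Adj]

lemma Connected.two_mul_degree_le_sum_dist (hconn : G.Connected) {x y : V} (hxy : G.Adj x y) :
    2 * G.degree x ≤
      ∑ u ∈ G.neighborFinset x, G.dist u y + 2 + #(G.neighborFinset x ∩ G.neighborFinset y) := by
  have key : ∀ u, 2 ≤
      G.dist u y + (if u = y then 2 else 0) + (if u ∈ G.neighborFinset y then 1 else 0) := by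
    intro u
    by_cases huy : u = y
    · simp [huy]
    by_cases hadj : G.Adj u y
    · simp [huy, hadj.symm, dist_eq_one_iff_adj.2 hadj]
    · have := hconn.one_lt_dist_of_ne_of_not_adj huy hadj
      simp only [huy, if_false, add_zero, mem_neighborFinset]
      omega
  calc 2 * G.degree x = ∑ u ∈ G.neighborFinset x, 2 := by
        rw [sum_const, card_neighborFinset_eq_degree, smul_eq_mul, mul_comm]
    _ ≤ ∑ u ∈ G.neighborFinset x,
          (G.dist u y + (if u = y then 2 else 0) + (if u ∈ G.neighborFinset y then 1 else 0)) :=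
        sum_le_sum fun u _ => key u
    _ = _ := by
        rw [sum_add_distrib, sum_add_distrib, sum_ite_eq',
          if_pos (G.mem_neighborFinset x y |>.2 hxy), sum_boole, filter_mem_eq_inter]
        simp

end SimpleGraph

section Curvature

variable {G : SimpleGraph V} [Fintype V] [DecidableRel G.Adj]

lemma planCosts_muIdle_nonempty {x y : V} (hx : 0 < G.degree x) (hy : 0 < G.degree y) {p : ℝ}
    (h0 : 0 ≤ p) (h1 : p ≤ 1) : (planCosts G (muIdle G p x) (muIdle G p y)).Nonempty :=
  ⟨_, sum_dist_mul_mem_planCosts G (muIdle_nonneg G h0 h1 x) (muIdle_nonneg G h0 h1 y)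
    (sum_muIdle G hx p) (sum_muIdle G hy p)⟩

lemma wassDist_muIdle_lazy_le {x y : V} (hx : 0 < G.degree x) (hy : 0 < G.degree y) {p t : ℝ}
    (h0 : 0 ≤ p) (h1 : p ≤ 1) (ht0 : 0 ≤ t) (ht1 : t ≤ 1) :
    wassDist G (muIdle G (t * p + (1 - t)) x) (muIdle G (t * p + (1 - t)) y) ≤
      t * wassDist G (muIdle G p x) (muIdle G p y) + (1 - t) * G.dist x y := by
  set f : ℝ → ℝ := fun c => t * c + (1 - t) * G.dist x y
  have hf : Monotone f := fun a b hab => by simp only [f]; gcongr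
  have hne := planCosts_muIdle_nonempty hx hy h0 h1
  simp only [wassDist_eq_sInf_planCosts]
  rw [show t * sInf _ + _ = f (sInf _) from rfl,
    hf.map_csInf_of_continuousAt (by fun_prop) hne (planCosts_bddBelow G _ _)]
  refine csInf_le_csInf (planCosts_bddBelow G _ _) (hne.image f) ?_
  rintro _ ⟨c, hc, rfl⟩
  rw [muIdle_lazy, muIdle_lazy]
  exact convexComb_mem_planCosts G hc (dist_mem_planCosts_single G x y) ht0 ht1

lemma one_sub_le_of_mem_planCosts_muIdle [DecidableEq V] (hconn : G.Connected) {x y : V}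
    (hxy : G.Adj x y) {p c : ℝ} (hp : p ≤ 1)
    (hc : c ∈ planCosts G (muIdle G p x) (muIdle G p y)) :
    1 - (1 - p) * ((2 + #(G.neighborFinset x ∩ G.neighborFinset y)) / G.degree x) ≤ c := by
  set a : ℝ := ((G.neighborFinset x ∩ G.neighborFinset y).card : ℝ)
  set S : ℝ := ∑ u ∈ G.neighborFinset x, (G.dist u y : ℝ)
  have hx : (0 : ℝ) < G.degree x := by exact_mod_cast hxy.degree_pos_left
  have hy : (0 : ℝ) < G.degree y := by exact_mod_cast hxy.degree_pos_right
  have hlip : ∀ u v, (G.dist u y : ℝ) - G.dist v y ≤ G.dist u v := fun u v => by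
    rw [sub_le_iff_le_add]
    exact_mod_cast hconn.dist_triangle
  have hNy : ∑ u ∈ G.neighborFinset y, (G.dist u y : ℝ) = G.degree y := by
    rw [sum_congr rfl fun u hu => by
      rw [SimpleGraph.dist_eq_one_iff_adj.2 ((G.mem_neighborFinset y u).1 hu).symm]]
    simp
  have hNx : 2 * G.degree x - 2 - a ≤ S := by
    have : 2 * (G.degree x : ℝ) ≤ S + 2 + a := by
      simp only [S, a]
      exact_mod_cast hconn.two_mul_degree_le_sum_dist hxy
    linarith
  have hkey := sum_mul_sub_sum_mul_le_of_mem_planCosts G hc hlip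
  rw [sum_mul_muIdle, sum_mul_muIdle, SimpleGraph.dist_eq_one_iff_adj.2 hxy,
    SimpleGraph.dist_self, hNy] at hkey
  calc 1 - (1 - p) * ((2 + a) / G.degree x)
      = p + (1 - p) / G.degree x * (2 * G.degree x - 2 - a)
          - (1 - p) / G.degree y * G.degree y := by
        field_simp
        ring
    _ ≤ p + (1 - p) / G.degree x * S - (1 - p) / G.degree y * G.degree y := by
        gcongr
    _ ≤ c := by simpa using hkey

lemma one_sub_le_wassDist_muIdle [DecidableEq V] (hconn : G.Connected) {x y : V}
    (hxy : G.Adj x y) {p : ℝ} (h0 : 0 ≤ p) (h1 : p ≤ 1) :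
    1 - (1 - p) * ((2 + #(G.neighborFinset x ∩ G.neighborFinset y)) / G.degree x) ≤
      wassDist G (muIdle G p x) (muIdle G p y) := by
  rw [wassDist_eq_sInf_planCosts]
  exact le_csInf (planCosts_muIdle_nonempty hxy.degree_pos_left hxy.degree_pos_right h0 h1)
    fun c hc => one_sub_le_of_mem_planCosts_muIdle hconn hxy h1 hc

end Curvature

lemma limUnder_nhdsLT_le_of_monotoneOn {f : ℝ → ℝ} {a b K : ℝ} (hab : a < b)
    (hf : MonotoneOn f (Set.Ioo a b)) (hK : ∀ p ∈ Set.Ioo a b, f p ≤ K) :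
    limUnder (𝓝[<] b) f ≤ K := by
  have hne : (Set.Ioo a b).Nonempty := Set.nonempty_Ioo.2 hab
  rw [(hf.tendsto_nhdsWithin_Ioo_left hne ⟨K, Set.forall_mem_image.2 hK⟩).limUnder_eq]
  exact csSup_le (hne.image f) (Set.forall_mem_image.2 hK)

lemma monotoneOn_one_sub_div_one_sub {W : ℝ → ℝ}
    (hW : ∀ p ∈ Set.Ioo (0 : ℝ) 1, ∀ t ∈ Set.Ioc (0 : ℝ) 1,
      W (t * p + (1 - t)) ≤ t * W p + (1 - t)) :
    MonotoneOn (fun p => (1 - W p) / (1 - p)) (Set.Ioo 0 1) := by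
  intro p hp q hq hpq
  have hp1 : 0 < 1 - p := by linarith [hp.2]
  have hq1 : 0 < 1 - q := by linarith [hq.2]
  set t := (1 - q) / (1 - p)
  have ht : t ∈ Set.Ioc (0 : ℝ) 1 := ⟨by positivity, (div_le_one hp1).2 (by linarith)⟩
  have hq : t * p + (1 - t) = q := by simp only [t]; field_simp; ring
  have := hW p hp t ht
  rw [hq] at this
  show (1 - W p) / (1 - p) ≤ (1 - W q) / (1 - q)
  rw [div_le_div_iff₀ hp1 hq1]
  calc (1 - W p) * (1 - q) = t * (1 - W p) * (1 - p) := by simp only [t]; field_simp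
    _ ≤ (1 - W q) * (1 - p) := by gcongr; linarith

lemma limUnder_one_sub_div_one_sub_le {W : ℝ → ℝ} {K : ℝ}
    (hW : ∀ p ∈ Set.Ioo (0 : ℝ) 1, ∀ t ∈ Set.Ioc (0 : ℝ) 1,
      W (t * p + (1 - t)) ≤ t * W p + (1 - t))
    (hK : ∀ p ∈ Set.Ioo (0 : ℝ) 1, 1 - (1 - p) * K ≤ W p) :
    limUnder (𝓝[<] 1) (fun p => (1 - W p) / (1 - p)) ≤ K :=
  limUnder_nhdsLT_le_of_monotoneOn zero_lt_one (monotoneOn_one_sub_div_one_sub hW) fun p hp => by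
    rw [div_le_iff₀ (by linarith [hp.2])]
    linarith [hK p hp]

/-- For any amply regular graph with parameters `(n, d, α, β)`, the Lin-Lu-Yau
curvature of every edge is at most `(2 + α)/d`. -/
theorem stmt17 [Fintype V] [DecidableEq V] (G : SimpleGraph V) [DecidableRel G.Adj]
    (hconn : G.Connected) (n d α β : ℕ) (h : IsAmplyRegular G n d α β)
    (x y : V) (hxy : G.Adj x y) :
    lly G x y ≤ (2 + (α : ℝ)) / d := by
  obtain ⟨-, hreg, hα, -⟩ := h
  have hdist : (G.dist x y : ℝ) = 1 := by simp [SimpleGraph.dist_eq_one_iff_adj.2 hxy]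
  simp only [lly, ollivier, hdist, div_one]
  refine limUnder_one_sub_div_one_sub_le (fun p hp t ht => ?_) fun p hp => ?_
  · simpa [hdist] using wassDist_muIdle_lazy_le hxy.degree_pos_left hxy.degree_pos_right
      hp.1.le hp.2.le ht.1.le ht.2
  · simpa [hreg x, hα x y hxy] using
      one_sub_le_wassDist_muIdle hconn hxy hp.1.le hp.2.le
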